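/- arXiv:1401.4294 — 3 statements merged into one kernel-verified Lean document; each statement's English description precedes it below -/
import Mathlib

section
/- Let s, r ≥ 0 be integers, ν an integer with 1 ≤ ν ≤ s + r, h > 0, and x₀ ∈ ℝ, with nodes x₀ + jh for j = -s, …, r. Let α_{-s}, …, α_r be the unique real coefficients such that ∑_{j=-s}^{r} α_j · P(x₀ + jh) = h^ν · P^{(ν)}(x₀) for every polynomial P of degree at most s + r. Then there is a constant C, depending only on s, r and ν (not on h, x₀, or y), such that for every function y : ℝ → ℝ that is (s+r+1)-times continuously differentiable on [x₀ - sh, x₀ + rh] with |y^{(s+r+1)}(t)| ≤ M on that interval, one has |y^{(ν)}(x₀) - h^{-ν} ∑_{j=-s}^{r} α_j y(x₀ + jh)| ≤ C · M · h^{s+r+1-ν}. -/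
/-!
Exactness on polynomials of degree `≤ s + r` pins the weights down: testing it on the Lagrange
basis polynomial `ℓⱼ` of the node `j`, rescaled to the grid, gives `αⱼ = ℓⱼ⁽ᵛ⁾(0)`, which depends
on neither `h` nor `x₀`. Applied to the Taylor polynomial `T` of `y` at `x₀` of degree `s + r`,
exactness turns the error into `h⁻ᵛ ∑ⱼ αⱼ (T - y)(x₀ + j h)`, and the Lagrange form of the
remainder bounds each `|(T - y)(x₀ + j h)|` by `M |j h|^(s+r+1) / (s+r+1)!`.
-/

open Polynomial Finset
open scoped Nat

theorem iteratedDerivWithin_subset {𝕜 F : Type*} [NontriviallyNormedField 𝕜]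
    [NormedAddCommGroup F] [NormedSpace 𝕜 F] {f : 𝕜 → F} {s t : Set 𝕜} {n : ℕ} {x : 𝕜}
    (st : s ⊆ t) (hs : UniqueDiffOn 𝕜 s) (ht : UniqueDiffOn 𝕜 t) (hf : ContDiffOn 𝕜 n f t)
    (hx : x ∈ s) : iteratedDerivWithin n f s x = iteratedDerivWithin n f t x := by
  rw [iteratedDerivWithin, iteratedFDerivWithin_subset st hs ht hf hx, iteratedDerivWithin]

theorem taylorWithinEval_subset {E : Type*} [NormedAddCommGroup E] [NormedSpace ℝ E]
    {f : ℝ → E} {s t : Set ℝ} {n : ℕ} {x₀ : ℝ}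
    (st : s ⊆ t) (hs : UniqueDiffOn ℝ s) (ht : UniqueDiffOn ℝ t) (hf : ContDiffOn ℝ n f t)
    (hx₀ : x₀ ∈ s) : taylorWithinEval f n s x₀ = taylorWithinEval f n t x₀ := by
  ext x
  simp only [taylor_within_apply]
  refine sum_congr rfl fun k hk => ?_
  rw [iteratedDerivWithin_subset st hs ht (hf.of_le ?_) hx₀]
  exact_mod_cast Nat.lt_succ_iff.mp (mem_range.mp hk)

theorem abs_sub_taylorWithinEval_Icc_le {f : ℝ → ℝ} {a b M x₀ x : ℝ} {n : ℕ}
    (hf : ContDiffOn ℝ (n + 1) f (Set.Icc a b))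
    (hM : ∀ t ∈ Set.Icc a b, |iteratedDerivWithin (n + 1) f (Set.Icc a b) t| ≤ M)
    (hx₀ : x₀ ∈ Set.Icc a b) (hx : x ∈ Set.Icc a b) :
    |f x - taylorWithinEval f n (Set.Icc a b) x₀ x| ≤ M * |x - x₀| ^ (n + 1) / (n + 1)! := by
  rcases eq_or_ne x₀ x with rfl | hne
  · simp
  have hsub : Set.uIcc x₀ x ⊆ Set.Icc a b := Set.uIcc_subset_Icc hx₀ hx
  have hab : a < b := by
    rcases hne.lt_or_gt with h | h
    · exact hx₀.1.trans_lt (h.trans_le hx.2)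
    · exact hx.1.trans_lt (h.trans_le hx₀.2)
  have hIcc : UniqueDiffOn ℝ (Set.Icc a b) := uniqueDiffOn_Icc hab
  obtain ⟨x', hx', hrem⟩ := taylor_mean_remainder_lagrange_iteratedDeriv hne (hf.mono hsub)
  have hx'_nhds : Set.Icc a b ∈ nhds x' :=
    Filter.mem_of_superset (Icc_mem_nhds hx'.1 hx'.2) hsub
  rw [← taylorWithinEval_subset hsub (uniqueDiffOn_uIcc hne) hIcc hf.of_succ Set.left_mem_uIcc,
    hrem, ← iteratedDerivWithin_eq_iteratedDeriv hIcc (hf.contDiffAt hx'_nhds)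
      (mem_of_mem_nhds hx'_nhds), abs_div, abs_mul, abs_pow, Nat.abs_cast]
  gcongr
  exact hM x' (mem_of_mem_nhds hx'_nhds)

/-- Mathlib's `taylorWithin` lives in a `PolynomialModule`; the exactness hypothesis needs the
Taylor polynomial as an element of `ℝ[X]`. -/
noncomputable def taylorWithinPolynomial (f : ℝ → ℝ) (n : ℕ) (s : Set ℝ) (x₀ : ℝ) : ℝ[X] :=
  ∑ k ∈ range (n + 1), C (iteratedDerivWithin k f s x₀ / k !) * (X - C x₀) ^ k

section TaylorPolynomial

variable (f : ℝ → ℝ) (n : ℕ) (s : Set ℝ) (x₀ : ℝ)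

theorem natDegree_taylorWithinPolynomial_le :
    (taylorWithinPolynomial f n s x₀).natDegree ≤ n := by
  refine natDegree_sum_le_of_forall_le _ _ fun k hk => ?_
  refine (natDegree_C_mul_le _ _).trans ?_
  rw [natDegree_pow, natDegree_X_sub_C, mul_one]
  exact Nat.lt_succ_iff.mp (mem_range.mp hk)

theorem eval_taylorWithinPolynomial (x : ℝ) :
    (taylorWithinPolynomial f n s x₀).eval x = taylorWithinEval f n s x₀ x := by
  simp only [taylorWithinPolynomial, taylor_within_apply, eval_finsetSum, eval_mul, eval_C,
    eval_pow, eval_sub, eval_X, smul_eq_mul]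
  exact sum_congr rfl fun k _ => by ring

theorem eval_iterate_derivative_taylorWithinPolynomial_self {k : ℕ} (hk : k ≤ n) :
    (derivative^[k] (taylorWithinPolynomial f n s x₀)).eval x₀ =
      iteratedDerivWithin k f s x₀ := by
  simp only [taylorWithinPolynomial, iterate_derivative_sum, iterate_derivative_C_mul,
    iterate_derivative_X_sub_pow, eval_finsetSum, eval_mul, eval_C, eval_pow, eval_sub, eval_X,
    sub_self, nsmul_eq_mul, eval_natCast]
  rw [sum_eq_single k]
  · rw [Nat.descFactorial_self, Nat.sub_self, pow_zero, mul_one]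
    field_simp
  · intro m _ hm
    rcases hm.lt_or_gt with hmk | hkm
    · rw [(Nat.descFactorial_eq_zero_iff_lt).mpr hmk]
      simp
    · rw [zero_pow (Nat.sub_ne_zero_of_lt hkm)]
      simp
  · exact fun hk' => absurd (mem_range.mpr (Nat.lt_succ_of_le hk)) hk'

end TaylorPolynomial

theorem iterate_derivative_comp_C_mul_X_add_C {R : Type*} [CommSemiring R] (p : R[X]) (a b : R)
    (k : ℕ) : derivative^[k] (p.comp (C a * X + C b)) =
      C (a ^ k) * (derivative^[k] p).comp (C a * X + C b) := by
  induction k generalizing p with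
  | zero => simp
  | succ k ih =>
    rw [Function.iterate_succ_apply, derivative_comp, derivative_add, derivative_C_mul_X,
      derivative_C, add_zero, iterate_derivative_C_mul, ih, ← Function.iterate_succ_apply,
      ← mul_assoc, ← C_mul, pow_succ']

noncomputable def finiteDiffCoeff (s r ν : ℕ) (j : ℤ) : ℝ :=
  (derivative^[ν] (Lagrange.basis (Finset.Icc (-(s : ℤ)) r) (fun i : ℤ => (i : ℝ)) j)).eval 0

theorem finiteDiffCoeff_eq_of_exact {s r ν : ℕ} {h x₀ : ℝ} (hh : h ≠ 0) {α : ℤ → ℝ}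
    (hα : ∀ P : ℝ[X], P.natDegree ≤ s + r →
      ∑ j ∈ Finset.Icc (-(s : ℤ)) r, α j * P.eval (x₀ + j * h) =
        h ^ ν * (derivative^[ν] P).eval x₀)
    {j : ℤ} (hj : j ∈ Finset.Icc (-(s : ℤ)) r) : α j = finiteDiffCoeff s r ν j := by
  set ℓ := Lagrange.basis (Finset.Icc (-(s : ℤ)) r) (fun i : ℤ => (i : ℝ)) j
  set q : ℝ[X] := C h⁻¹ * X + C (-(x₀ / h))
  have hinj : Set.InjOn (fun i : ℤ => (i : ℝ)) (Finset.Icc (-(s : ℤ)) r) :=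
    Int.cast_injective.injOn
  have hq : ∀ t : ℝ, q.eval (x₀ + t * h) = t := by
    intro t
    simp only [q, eval_add, eval_mul, eval_C, eval_X]
    field_simp
    ring
  have hdeg : (ℓ.comp q).natDegree ≤ s + r := by
    calc (ℓ.comp q).natDegree ≤ ℓ.natDegree * q.natDegree := natDegree_comp_le
      _ ≤ (s + r) * 1 := by
        rw [Lagrange.natDegree_basis hinj hj, Int.card_Icc]
        exact Nat.mul_le_mul (by omega) natDegree_linear_le
      _ = s + r := mul_one _
  have hsum : ∑ i ∈ Finset.Icc (-(s : ℤ)) r, α i * (ℓ.comp q).eval (x₀ + i * h) = α j := by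
    simp only [eval_comp, hq]
    rw [sum_eq_single j]
    · rw [Lagrange.eval_basis_self hinj hj, mul_one]
    · intro i hi hij
      exact mul_eq_zero_of_right _ (Lagrange.eval_basis_of_ne hij.symm hi)
    · exact fun hj' => absurd hj hj'
  have hq0 : q.eval x₀ = 0 := by simpa using hq 0
  have hexact := hα _ hdeg
  rw [hsum, iterate_derivative_comp_C_mul_X_add_C, eval_mul, eval_C, eval_comp, hq0, ← mul_assoc,
    inv_pow, mul_inv_cancel₀ (pow_ne_zero _ hh), one_mul] at hexact
  exact hexact

theorem add_intCast_mul_mem_Icc {s r : ℕ} {j : ℤ} (hj : j ∈ Finset.Icc (-(s : ℤ)) r) {h : ℝ}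
    (hh : 0 ≤ h) (x₀ : ℝ) : x₀ + j * h ∈ Set.Icc (x₀ - s * h) (x₀ + r * h) := by
  obtain ⟨hsj, hjr⟩ := Finset.mem_Icc.mp hj
  have hsj' : -(s : ℝ) ≤ j := by exact_mod_cast hsj
  have hjr' : (j : ℝ) ≤ r := by exact_mod_cast hjr
  constructor <;> nlinarith

theorem abs_sub_sum_div_le_of_exact {s r ν : ℕ} {h x₀ : ℝ} (hh : 0 < h) {α : ℤ → ℝ}
    (hα : ∀ P : ℝ[X], P.natDegree ≤ s + r →
      ∑ j ∈ Finset.Icc (-(s : ℤ)) r, α j * P.eval (x₀ + j * h) =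
        h ^ ν * (derivative^[ν] P).eval x₀)
    {T : ℝ[X]} (hT : T.natDegree ≤ s + r) (y : ℝ → ℝ) {E : ℤ → ℝ}
    (hE : ∀ j ∈ Finset.Icc (-(s : ℤ)) r, |T.eval (x₀ + j * h) - y (x₀ + j * h)| ≤ E j) :
    |(derivative^[ν] T).eval x₀ - (∑ j ∈ Finset.Icc (-(s : ℤ)) r, α j * y (x₀ + j * h)) / h ^ ν|
      ≤ (∑ j ∈ Finset.Icc (-(s : ℤ)) r, |finiteDiffCoeff s r ν j| * E j) / h ^ ν := by
  have hpos : 0 < h ^ ν := pow_pos hh ν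
  have herr : (derivative^[ν] T).eval x₀ -
      (∑ j ∈ Finset.Icc (-(s : ℤ)) r, α j * y (x₀ + j * h)) / h ^ ν =
      (∑ j ∈ Finset.Icc (-(s : ℤ)) r, α j * (T.eval (x₀ + j * h) - y (x₀ + j * h))) / h ^ ν := by
    simp only [mul_sub, sum_sub_distrib, hα T hT]
    rw [sub_div, mul_div_cancel_left₀ _ hpos.ne']
  rw [herr, abs_div, abs_of_pos hpos]
  gcongr
  refine (abs_sum_le_sum_abs _ _).trans (sum_le_sum fun j hj => ?_)
  rw [abs_mul, finiteDiffCoeff_eq_of_exact hh.ne' hα hj]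
  exact mul_le_mul_of_nonneg_left (hE j hj) (abs_nonneg _)

theorem stmt_1_general (s r ν : ℕ) (hν2 : ν ≤ s + r) :
    ∃ C : ℝ, ∀ h : ℝ, 0 < h → ∀ (x₀ : ℝ) (α : ℤ → ℝ),
      (∀ P : Polynomial ℝ, P.natDegree ≤ s + r →
        ∑ j ∈ Finset.Icc (-(s : ℤ)) (r : ℤ), α j * P.eval (x₀ + (j : ℝ) * h) =
          h ^ ν * (Polynomial.derivative^[ν] P).eval x₀) →
      ∀ (y : ℝ → ℝ) (M : ℝ),
        ContDiffOn ℝ (s + r + 1) y (Set.Icc (x₀ - s * h) (x₀ + r * h)) →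
        (∀ t ∈ Set.Icc (x₀ - s * h) (x₀ + r * h),
          |iteratedDerivWithin (s + r + 1) y (Set.Icc (x₀ - s * h) (x₀ + r * h)) t| ≤ M) →
        |iteratedDerivWithin ν y (Set.Icc (x₀ - s * h) (x₀ + r * h)) x₀ -
            (∑ j ∈ Finset.Icc (-(s : ℤ)) (r : ℤ), α j * y (x₀ + (j : ℝ) * h)) / h ^ ν| ≤
          C * M * h ^ (s + r + 1 - ν) := by
  refine ⟨∑ j ∈ Finset.Icc (-(s : ℤ)) r,
    |finiteDiffCoeff s r ν j| * |(j : ℝ)| ^ (s + r + 1) / (s + r + 1)!, ?_⟩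
  intro h hh x₀ α hα y M hy hM
  set S := Set.Icc (x₀ - s * h) (x₀ + r * h)
  set T := taylorWithinPolynomial y (s + r) S x₀
  have hx₀ : x₀ ∈ S := by
    simpa [S] using add_intCast_mul_mem_Icc (s := s) (r := r) (j := 0) (by simp) hh.le x₀
  have hrem : ∀ j ∈ Finset.Icc (-(s : ℤ)) r, |T.eval (x₀ + j * h) - y (x₀ + j * h)| ≤
      M * |(j : ℝ)| ^ (s + r + 1) * h ^ (s + r + 1) / (s + r + 1)! := by
    intro j hj
    rw [abs_sub_comm, eval_taylorWithinPolynomial]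
    refine (abs_sub_taylorWithinEval_Icc_le (by exact_mod_cast hy) hM hx₀
      (add_intCast_mul_mem_Icc hj hh.le x₀)).trans_eq ?_
    rw [add_sub_cancel_left, abs_mul, abs_of_pos hh, mul_pow, mul_assoc]
  have hbound := abs_sub_sum_div_le_of_exact hh hα (natDegree_taylorWithinPolynomial_le ..) y hrem
  rw [eval_iterate_derivative_taylorWithinPolynomial_self _ _ _ _ hν2] at hbound
  refine hbound.trans_eq ?_
  rw [pow_sub₀ _ hh.ne' (by omega), sum_mul, sum_mul, sum_div]
  refine sum_congr rfl fun j _ => ?_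
  ring

/-- Error bound of order `p = s + r + 1 - ν` for the `(s+r)`-step finite
difference formula on a uniform grid: if the coefficients `α` are exact on
polynomials of degree at most `s+r` (i.e. `∑ⱼ αⱼ P(x₀+jh) = hᵛ P⁽ᵛ⁾(x₀)`),
then there is a constant `C = C(s,r,ν)` such that for every `C^{s+r+1}`
function `y` on `[x₀-sh, x₀+rh]` whose `(s+r+1)`-st derivative is bounded by
`M` there,
`|y⁽ᵛ⁾(x₀) - h^{-ν} ∑ⱼ αⱼ y(x₀+jh)| ≤ C M h^{s+r+1-ν}`. -/
theorem stmt_1 (s r ν : ℕ) (hν1 : 1 ≤ ν) (hν2 : ν ≤ s + r) :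
    ∃ C : ℝ, ∀ h : ℝ, 0 < h → ∀ (x₀ : ℝ) (α : ℤ → ℝ),
      (∀ P : Polynomial ℝ, P.natDegree ≤ s + r →
        ∑ j ∈ Finset.Icc (-(s : ℤ)) (r : ℤ), α j * P.eval (x₀ + (j : ℝ) * h) =
          h ^ ν * (Polynomial.derivative^[ν] P).eval x₀) →
      ∀ (y : ℝ → ℝ) (M : ℝ),
        ContDiffOn ℝ (s + r + 1) y (Set.Icc (x₀ - s * h) (x₀ + r * h)) →
        (∀ t ∈ Set.Icc (x₀ - s * h) (x₀ + r * h),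
          |iteratedDerivWithin (s + r + 1) y (Set.Icc (x₀ - s * h) (x₀ + r * h)) t| ≤ M) →
        |iteratedDerivWithin ν y (Set.Icc (x₀ - s * h) (x₀ + r * h)) x₀ -
            (∑ j ∈ Finset.Icc (-(s : ℤ)) (r : ℤ), α j * y (x₀ + (j : ℝ) * h)) / h ^ ν| ≤
          C * M * h ^ (s + r + 1 - ν) :=
  stmt_1_general s r ν hν2
end

section
/- Let a < b be real numbers and q : ℝ → ℝ continuous on [a, b]. Suppose λ ∈ ℂ and y : ℝ → ℂ is twice continuously differentiable on [a, b], is not identically zero on [a, b], and satisfies -y''(x) + q(x) y(x) = λ y(x) for all x ∈ [a, b] together with the Dirichlet boundary conditions y(a) = y(b) = 0. Then λ is real. -/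
/-!
Green's identity: if `y'' = (q - λ) y` with `q` real, the Wronskian `W = y' ȳ - ȳ' y` of `ȳ` and
`y` satisfies `W' = (λ̄ - λ) |y|²`. Integrating over `[a, b]`, the Dirichlet conditions make the
boundary term `W b - W a` vanish, while `∫ |y|² > 0` because `y` is continuous and not
identically zero. Hence `λ̄ = λ`.
-/

open Set MeasureTheory ComplexConjugate Topology

theorem iteratedDerivWithin_two_eq {𝕜 F : Type*} [NontriviallyNormedField 𝕜] [NormedAddCommGroup F]
    [NormedSpace 𝕜 F] (f : 𝕜 → F) (s : Set 𝕜) :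
    iteratedDerivWithin 2 f s = derivWithin (derivWithin f s) s := by
  rw [iteratedDerivWithin_succ', iteratedDerivWithin_one]

theorem ContDiffOn.hasDerivAt_derivWithin_of_mem_nhds {𝕜 F : Type*} [NontriviallyNormedField 𝕜]
    [NormedAddCommGroup F] [NormedSpace 𝕜 F] {f : 𝕜 → F} {s : Set 𝕜} {x : 𝕜}
    (hf : ContDiffOn 𝕜 2 f s) (hs : UniqueDiffOn 𝕜 s) (hx : s ∈ 𝓝 x) :
    HasDerivAt (derivWithin f s) (iteratedDerivWithin 2 f s x) x := by
  rw [iteratedDerivWithin_two_eq]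
  exact ((hf.derivWithin hs (m := 1) (by norm_num)).differentiableOn one_ne_zero x
    (mem_of_mem_nhds hx)).hasDerivWithinAt.hasDerivAt hx

def conjWronskian (y y' : ℝ → ℂ) (x : ℝ) : ℂ :=
  y' x * conj (y x) - conj (y' x) * y x

theorem hasDerivAt_conjWronskian {y y' : ℝ → ℂ} {x q : ℝ} {lam y'' : ℂ}
    (hy : HasDerivAt y (y' x) x) (hy' : HasDerivAt y' y'' x) (heq : y'' = (q - lam) * y x) :
    HasDerivAt (conjWronskian y y') ((conj lam - lam) * Complex.normSq (y x)) x := by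
  refine ((hy'.mul hy.star).sub (hy'.star.mul hy)).congr_deriv ?_
  simp only [heq, ← Complex.mul_conj, Complex.star_def, map_mul, map_sub, Complex.conj_ofReal]
  ring

theorem intervalIntegral_pos_of_continuousOn_of_nonneg {f : ℝ → ℝ} {a b x₀ : ℝ}
    (hf : ContinuousOn f (Icc a b)) (hf₀ : ∀ x ∈ Icc a b, 0 ≤ f x) (hx₀ : x₀ ∈ Ioo a b)
    (hfx₀ : f x₀ ≠ 0) : 0 < ∫ x in a..b, f x := by
  have hab : a ≤ b := (hx₀.1.trans hx₀.2).le
  rw [intervalIntegral.integral_pos_iff_support_of_nonneg_ae'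
    ((ae_restrict_iff' measurableSet_uIoc).2 (.of_forall fun x hx ↦ hf₀ x
      (Ioc_subset_Icc_self (uIoc_of_le hab ▸ hx)))) (hf.intervalIntegrable_of_Icc hab)]
  refine ⟨hx₀.1.trans hx₀.2, Measure.measure_pos_of_mem_nhds volume (x := x₀) ?_ |>.trans_le
    (measure_mono (inter_subset_inter_right _ Ioo_subset_Ioc_self))⟩
  exact Filter.inter_mem ((hf.continuousAt (Icc_mem_nhds hx₀.1 hx₀.2)).eventually_ne hfx₀)
    (Ioo_mem_nhds hx₀.1 hx₀.2)

theorem conj_sub_mul_integral_normSq_eq_conjWronskian_sub {a b : ℝ} (hab : a < b) {q : ℝ → ℝ}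
    {lam : ℂ} {y : ℝ → ℂ} (hy : ContDiffOn ℝ 2 y (Icc a b))
    (heq : ∀ x ∈ Ioo a b, iteratedDerivWithin 2 y (Icc a b) x = (q x - lam) * y x) :
    (conj lam - lam) * ∫ x in a..b, (Complex.normSq (y x) : ℂ) =
      conjWronskian y (derivWithin y (Icc a b)) b -
        conjWronskian y (derivWithin y (Icc a b)) a := by
  have hs : UniqueDiffOn ℝ (Icc a b) := uniqueDiffOn_Icc hab
  have hyc : ContinuousOn y (Icc a b) := hy.continuousOn
  have hy'c : ContinuousOn (derivWithin y (Icc a b)) (Icc a b) :=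
    (hy.derivWithin hs (m := 1) (by norm_num)).continuousOn
  rw [← intervalIntegral.integral_const_mul]
  refine intervalIntegral.integral_eq_sub_of_hasDerivAt_of_le hab.le ?_ (fun x hx ↦ ?_) ?_
  · unfold conjWronskian
    fun_prop
  · have hx' : Icc a b ∈ 𝓝 x := Icc_mem_nhds hx.1 hx.2
    exact hasDerivAt_conjWronskian
      ((hy.differentiableOn two_ne_zero x (mem_of_mem_nhds hx')).hasDerivWithinAt.hasDerivAt hx')
      (hy.hasDerivAt_derivWithin_of_mem_nhds hs hx') (heq x hx)
  · exact ContinuousOn.intervalIntegrable_of_Icc hab.le (by fun_prop)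

theorem stmt_4_general (a b : ℝ) (hab : a < b) (q : ℝ → ℝ)
    (lam : ℂ) (y : ℝ → ℂ)
    (hy : ContDiffOn ℝ 2 y (Set.Icc a b))
    (hy0 : ∃ x ∈ Set.Icc a b, y x ≠ 0)
    (heq : ∀ x ∈ Set.Icc a b,
      -(iteratedDerivWithin 2 y (Set.Icc a b) x) + (q x : ℂ) * y x = lam * y x)
    (hya : y a = 0) (hyb : y b = 0) :
    lam.im = 0 := by
  obtain ⟨x₀, hx₀, hyx₀⟩ := hy0
  have hx₀' : x₀ ∈ Ioo a b :=
    ⟨hx₀.1.lt_of_ne (by rintro rfl; exact hyx₀ hya), hx₀.2.lt_of_ne (by rintro rfl; exact hyx₀ hyb)⟩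
  have hgreen := conj_sub_mul_integral_normSq_eq_conjWronskian_sub hab hy (q := q) (lam := lam)
    fun x hx ↦ by linear_combination -heq x (Ioo_subset_Icc_self hx)
  have hpos : 0 < ∫ x in a..b, Complex.normSq (y x) :=
    intervalIntegral_pos_of_continuousOn_of_nonneg
      (Complex.continuous_normSq.comp_continuousOn hy.continuousOn)
      (fun x _ ↦ Complex.normSq_nonneg (y x)) hx₀' (Complex.normSq_pos.2 hyx₀).ne'
  simp only [conjWronskian, hya, hyb, map_zero, mul_zero, sub_zero,
    intervalIntegral.integral_ofReal, mul_eq_zero, Complex.ofReal_eq_zero, hpos.ne', or_false,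
    sub_eq_zero] at hgreen
  exact Complex.conj_eq_iff_im.1 hgreen

/-- Eigenvalues of the Dirichlet Sturm-Liouville problem `-y'' + q y = λ y`
on `[a, b]` are real: if `y : ℝ → ℂ` is twice continuously differentiable on
`[a, b]`, not identically zero there, solves the equation with parameter
`λ ∈ ℂ`, and satisfies `y(a) = y(b) = 0`, then `λ` is real. -/
theorem stmt_4 (a b : ℝ) (hab : a < b) (q : ℝ → ℝ)
    (hq : ContinuousOn q (Set.Icc a b)) (lam : ℂ) (y : ℝ → ℂ)
    (hy : ContDiffOn ℝ 2 y (Set.Icc a b))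
    (hy0 : ∃ x ∈ Set.Icc a b, y x ≠ 0)
    (heq : ∀ x ∈ Set.Icc a b,
      -(iteratedDerivWithin 2 y (Set.Icc a b) x) + (q x : ℂ) * y x = lam * y x)
    (hya : y a = 0) (hyb : y b = 0) :
    lam.im = 0 :=
  stmt_4_general a b hab q lam y hy hy0 heq hya hyb
end

section
/- Let a < b be real numbers, q : ℝ → ℝ continuous on [a, b], and λ < μ real numbers. Suppose y : ℝ → ℝ is twice continuously differentiable on [a, b], satisfies -y''(x) + q(x) y(x) = λ y(x) for all x ∈ [a, b], y(a) = y(b) = 0, and y(x) ≠ 0 for all x ∈ (a, b). Suppose z : ℝ → ℝ is twice continuously differentiable on [a, b], not identically zero on [a, b], and satisfies -z''(x) + q(x) z(x) = μ z(x) for all x ∈ [a, b]. Then z has a zero in the open interval (a, b). -/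
/-!
If `y > 0` on `(a, b)` with `y(a) = y(b) = 0` solves the equation for `λ` and `z > 0` on `(a, b)`
solves it for `μ > λ`, then the Wronskian `W = y z' - y' z` satisfies `W' = (λ - μ) y z < 0`,
so `W(b) < W(a)`. But `y` attains its minimum `0` at both endpoints, so `y'(a) ≥ 0 ≥ y'(b)`, and
`z ≥ 0` there by continuity; hence `W(a) = -y'(a) z(a) ≤ 0 ≤ -y'(b) z(b) = W(b)`. The general case
reduces to this one by replacing `y` and `z` by `± y` and `± z`, which is possible since a
continuous function without zeros on an interval has constant sign.
-/

open Set

theorem IsPreconnected.exists_mul_pos {s : Set ℝ} {f : ℝ → ℝ} (hs : IsPreconnected s)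
    (hf : ContinuousOn f s) (hf0 : ∀ x ∈ s, f x ≠ 0) : ∃ ε : ℝ, ∀ x ∈ s, 0 < ε * f x := by
  rcases s.eq_empty_or_nonempty with rfl | ⟨x₀, hx₀⟩
  · exact ⟨1, by simp⟩
  refine ⟨f x₀, fun x hx => ?_⟩
  by_contra! hle
  obtain ⟨w, hw, hw0⟩ := hs.intermediate_value hx hx₀ (continuousOn_const.mul hf)
    ⟨hle, (mul_self_pos.2 (hf0 x₀ hx₀)).le⟩
  exact mul_ne_zero (hf0 x₀ hx₀) (hf0 w hw) hw0

theorem IsLocalMinOn.hasDerivWithinAt_Icc_left_nonneg {f : ℝ → ℝ} {a b f' : ℝ} (hab : a < b)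
    (h : IsLocalMinOn f (Icc a b) a) (hf : HasDerivWithinAt f f' (Icc a b) a) : 0 ≤ f' := by
  have : 0 ≤ (b - a) * f' := by
    simpa using h.hasFDerivWithinAt_nonneg hf.hasFDerivWithinAt
      (sub_mem_posTangentConeAt_of_segment_subset (segment_eq_Icc hab.le).subset)
  exact nonneg_of_mul_nonneg_right this (sub_pos.2 hab)

theorem IsLocalMinOn.hasDerivWithinAt_Icc_right_nonpos {f : ℝ → ℝ} {a b f' : ℝ} (hab : a < b)
    (h : IsLocalMinOn f (Icc a b) b) (hf : HasDerivWithinAt f f' (Icc a b) b) : f' ≤ 0 := by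
  have hseg : segment ℝ b a ⊆ Icc a b := by rw [segment_symm, segment_eq_Icc hab.le]
  have : 0 ≤ (a - b) * f' := by
    simpa using h.hasFDerivWithinAt_nonneg hf.hasFDerivWithinAt
      (sub_mem_posTangentConeAt_of_segment_subset hseg)
  exact nonpos_of_mul_nonneg_right this (sub_neg.2 hab)

theorem ContDiffOn.hasDerivWithinAt_derivWithin {f : ℝ → ℝ} {s : Set ℝ} {x : ℝ}
    (hf : ContDiffOn ℝ 2 f s) (hs : UniqueDiffOn ℝ s) (hx : x ∈ s) :
    HasDerivWithinAt (derivWithin f s) (iteratedDerivWithin 2 f s x) s x := by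
  rw [iteratedDerivWithin_eq_iterate]
  exact ((hf.derivWithin hs (by norm_num)).differentiableOn one_ne_zero x hx).hasDerivWithinAt

theorem nonneg_of_pos_on_Ioo {a b : ℝ} (hab : a < b) {f : ℝ → ℝ} (hf : ContinuousOn f (Icc a b))
    (hpos : ∀ x ∈ Ioo a b, 0 < f x) {x : ℝ} (hx : x ∈ Icc a b) : 0 ≤ f x := by
  rw [← closure_Ioo hab.ne] at hf hx
  exact le_on_closure (fun x hx => (hpos x hx).le) continuousOn_const hf hx

namespace SturmLiouville

def IsSolutionOn (q : ℝ → ℝ) (c : ℝ) (s : Set ℝ) (f : ℝ → ℝ) : Prop :=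
  ContDiffOn ℝ 2 f s ∧ ∀ x ∈ s, -iteratedDerivWithin 2 f s x + q x * f x = c * f x

noncomputable def wronskian (s : Set ℝ) (f g : ℝ → ℝ) (x : ℝ) : ℝ :=
  f x * derivWithin g s x - derivWithin f s x * g x

variable {q : ℝ → ℝ} {c d : ℝ} {s : Set ℝ} {f g : ℝ → ℝ}

theorem IsSolutionOn.const_mul (hf : IsSolutionOn q c s f) (k : ℝ) :
    IsSolutionOn q c s (fun x => k * f x) := by
  refine ⟨contDiffOn_const.mul hf.1, fun x hx => ?_⟩
  rw [iteratedDerivWithin_const_mul_field]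
  linear_combination k * hf.2 x hx

theorem continuousOn_wronskian (hs : UniqueDiffOn ℝ s) (hf : ContDiffOn ℝ 2 f s)
    (hg : ContDiffOn ℝ 2 g s) : ContinuousOn (wronskian s f g) s :=
  (hf.continuousOn.mul (hg.continuousOn_derivWithin hs (by norm_num))).sub
    ((hf.continuousOn_derivWithin hs (by norm_num)).mul hg.continuousOn)

theorem hasDerivWithinAt_wronskian (hs : UniqueDiffOn ℝ s) (hf : IsSolutionOn q c s f)
    (hg : IsSolutionOn q d s g) {x : ℝ} (hx : x ∈ s) :
    HasDerivWithinAt (wronskian s f g) ((c - d) * (f x * g x)) s x := by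
  have hf' := (hf.1.differentiableOn (by norm_num) x hx).hasDerivWithinAt
  have hg' := (hg.1.differentiableOn (by norm_num) x hx).hasDerivWithinAt
  refine ((hf'.mul (hg.1.hasDerivWithinAt_derivWithin hs hx)).sub
    ((hf.1.hasDerivWithinAt_derivWithin hs hx).mul hg')).congr_deriv ?_
  linear_combination g x * hf.2 x hx - f x * hg.2 x hx

theorem not_forall_pos_of_lt {a b : ℝ} (hab : a < b) (hcd : c < d)
    (hf : IsSolutionOn q c (Icc a b) f) (hfa : f a = 0) (hfb : f b = 0)
    (hfpos : ∀ x ∈ Ioo a b, 0 < f x) (hg : IsSolutionOn q d (Icc a b) g) :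
    ¬ ∀ x ∈ Ioo a b, 0 < g x := by
  intro hgpos
  have hs := uniqueDiffOn_Icc hab
  have ha : a ∈ Icc a b := left_mem_Icc.2 hab.le
  have hb : b ∈ Icc a b := right_mem_Icc.2 hab.le
  have hfnonneg : ∀ x ∈ Icc a b, 0 ≤ f x := fun x => nonneg_of_pos_on_Ioo hab hf.1.continuousOn hfpos
  have hga : 0 ≤ g a := nonneg_of_pos_on_Ioo hab hg.1.continuousOn hgpos ha
  have hgb : 0 ≤ g b := nonneg_of_pos_on_Ioo hab hg.1.continuousOn hgpos hb
  have hf'a : 0 ≤ derivWithin f (Icc a b) a :=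
    IsLocalMinOn.hasDerivWithinAt_Icc_left_nonneg hab
      (isMinOn_iff.2 fun x hx => hfa ▸ hfnonneg x hx).localize
      (hf.1.differentiableOn (by norm_num) a ha).hasDerivWithinAt
  have hf'b : derivWithin f (Icc a b) b ≤ 0 :=
    IsLocalMinOn.hasDerivWithinAt_Icc_right_nonpos hab
      (isMinOn_iff.2 fun x hx => hfb ▸ hfnonneg x hx).localize
      (hf.1.differentiableOn (by norm_num) b hb).hasDerivWithinAt
  have hW : StrictAntiOn (wronskian (Icc a b) f g) (Icc a b) := by
    refine strictAntiOn_of_hasDerivWithinAt_neg (f' := fun x => (c - d) * (f x * g x))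
      (convex_Icc a b) (continuousOn_wronskian hs hf.1 hg.1) (fun x hx => ?_) (fun x hx => ?_)
    · exact (hasDerivWithinAt_wronskian hs hf hg (interior_subset hx)).mono interior_subset
    · rw [interior_Icc] at hx
      exact mul_neg_of_neg_of_pos (sub_neg.2 hcd) (mul_pos (hfpos x hx) (hgpos x hx))
  have hWab := hW ha hb hab
  simp only [wronskian, hfa, hfb, zero_mul, zero_sub] at hWab
  linarith [mul_nonneg hf'a hga, mul_nonpos_of_nonpos_of_nonneg hf'b hgb]

end SturmLiouville

theorem stmt_7_general (a b : ℝ) (hab : a < b) (q : ℝ → ℝ)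
    (lam mu : ℝ) (hlm : lam < mu)
    (y z : ℝ → ℝ)
    (hy : ContDiffOn ℝ 2 y (Set.Icc a b))
    (heqy : ∀ x ∈ Set.Icc a b,
      -(iteratedDerivWithin 2 y (Set.Icc a b) x) + q x * y x = lam * y x)
    (hya : y a = 0) (hyb : y b = 0)
    (hynz : ∀ x ∈ Set.Ioo a b, y x ≠ 0)
    (hz : ContDiffOn ℝ 2 z (Set.Icc a b))
    (heqz : ∀ x ∈ Set.Icc a b,
      -(iteratedDerivWithin 2 z (Set.Icc a b) x) + q x * z x = mu * z x) :
    ∃ x ∈ Set.Ioo a b, z x = 0 := by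
  by_contra! hznz
  obtain ⟨ε, hεy⟩ :=
    isPreconnected_Ioo.exists_mul_pos (hy.continuousOn.mono Ioo_subset_Icc_self) hynz
  obtain ⟨δ, hδz⟩ :=
    isPreconnected_Ioo.exists_mul_pos (hz.continuousOn.mono Ioo_subset_Icc_self) hznz
  exact SturmLiouville.not_forall_pos_of_lt hab hlm
    (SturmLiouville.IsSolutionOn.const_mul ⟨hy, heqy⟩ ε) (by simp [hya]) (by simp [hyb]) hεy
    (SturmLiouville.IsSolutionOn.const_mul ⟨hz, heqz⟩ δ) hδz

/-- Sturm comparison theorem for `-u'' + q u = λ u`: if `y` is a solution for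
the parameter `λ` that vanishes at `a` and `b` but not inside `(a, b)`, then
every solution `z` (not identically zero) for a larger parameter `μ > λ` must
vanish somewhere in `(a, b)`. -/
theorem stmt_7 (a b : ℝ) (hab : a < b) (q : ℝ → ℝ)
    (hq : ContinuousOn q (Set.Icc a b)) (lam mu : ℝ) (hlm : lam < mu)
    (y z : ℝ → ℝ)
    (hy : ContDiffOn ℝ 2 y (Set.Icc a b))
    (heqy : ∀ x ∈ Set.Icc a b,
      -(iteratedDerivWithin 2 y (Set.Icc a b) x) + q x * y x = lam * y x)
    (hya : y a = 0) (hyb : y b = 0)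
    (hynz : ∀ x ∈ Set.Ioo a b, y x ≠ 0)
    (hz : ContDiffOn ℝ 2 z (Set.Icc a b))
    (hz0 : ∃ x ∈ Set.Icc a b, z x ≠ 0)
    (heqz : ∀ x ∈ Set.Icc a b,
      -(iteratedDerivWithin 2 z (Set.Icc a b) x) + q x * z x = mu * z x) :
    ∃ x ∈ Set.Ioo a b, z x = 0 :=
  stmt_7_general a b hab q lam mu hlm y z hy heqy hya hyb hynz hz heqz
end
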